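/- Let v be an aperiodic infinite binary word, let u be its prefix of length ℓ ≥ 1, and let r be the shifted word defined by r_j = v_{ℓ+j} for j ≥ 0. If the series Φ_ℝ(v) converges with sum ζ, then the series Φ_ℝ(r) converges and Φ_ℝ(r) = T_u(ζ). Conversely, if the series Φ_ℝ(r) converges, then the series Φ_ℝ(v) converges. -/

import Mathlib

/-- An infinite binary word is eventually periodic if for some period `p ≥ 1`
its digits satisfy `v (n+p) = v n` from some index on. -/
def EventuallyPeriodicWord (v : ℕ → Bool) : Prop :=
  ∃ p : ℕ, 0 < p ∧ ∃ N : ℕ, ∀ n ≥ N, v (n + p) = v n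

/-- The position of the `i`-th `1` (0-indexed) of the infinite binary word `v`. -/
noncomputable def onePos (v : ℕ → Bool) (i : ℕ) : ℕ :=
  Nat.nth (fun n => v n = true) i

/-- The `m`-th partial sum of the series `Φ_ℝ(v) = −∑_{i} 2^{d_i}/3^{i+1}`,
where `d_i` enumerates the positions of the `1`s of `v`. -/
noncomputable def phiPartial (v : ℕ → Bool) (m : ℕ) : ℝ :=
  -∑ i ∈ Finset.range m, (2 : ℝ) ^ onePos v i / 3 ^ (i + 1)

/-- The maps `T_0(x) = x/2` and `T_1(x) = (3x+1)/2` on `ℝ`. -/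
noncomputable def Tb (b : Bool) (x : ℝ) : ℝ := if b then (3 * x + 1) / 2 else x / 2

/-- For a finite binary word `u = v_0 v_1 ⋯ v_{ℓ−1}`, the composite map
`T_u = T_{v_{ℓ−1}} ∘ ⋯ ∘ T_{v_1} ∘ T_{v_0}` on `ℝ` (first digit applied first). -/
noncomputable def Tword : List Bool → ℝ → ℝ
  | [], x => x
  | b :: u, x => Tword u (Tb b x)

/-- The prefix of length `ℓ` of an infinite binary word `v`. -/
def wordPrefix (v : ℕ → Bool) (ℓ : ℕ) : List Bool := (List.range ℓ).map v

open Filter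

/-!
Dropping the first digit `b` of `v` lowers every position `d_i` by one, which halves each term
`2^{d_i}/3^{i+1}`; if `b = 1`, the leading term `1/3` also disappears and the remaining indices
drop by one, which multiplies them by `3`. On partial sums this reads
`Φ_m(v_1 v_2 ⋯) = T_b(Φ_{m+b}(v))`. Since `T_b` is an affine homeomorphism of `ℝ`, convergence
transfers in both directions, and the limit `ζ` goes to `T_b(ζ)`; iterating along the prefix gives
`T_u(ζ)`. The positions `d_i` all exist because an aperiodic word has infinitely many `1`s.
-/

lemma infinite_setOf_eq_true_of_not_eventuallyPeriodicWord {v : ℕ → Bool}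
    (hv : ¬ EventuallyPeriodicWord v) : {n | v n = true}.Infinite := by
  intro hfin
  obtain ⟨N, hN⟩ := hfin.bddAbove
  have hfalse : ∀ n > N, v n = false := fun n hn =>
    Bool.eq_false_iff.2 fun h => absurd (hN h) (by omega)
  exact hv ⟨1, one_pos, N + 1, fun n hn => by
    rw [hfalse n (by omega), hfalse (n + 1) (by omega)]⟩

lemma Set.Infinite.setOf_eq_true_succ {v : ℕ → Bool} (hinf : {n | v n = true}.Infinite) :
    {j | v (j + 1) = true}.Infinite := by
  refine Set.infinite_of_forall_exists_gt fun a => ?_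
  obtain ⟨b, hb, hab⟩ := hinf.exists_gt (a + 1)
  exact ⟨b - 1, by simpa [Nat.sub_add_cancel (by omega : 1 ≤ b)] using hb, by omega⟩

lemma onePos_add_toNat {v : ℕ → Bool} (hinf : {n | v n = true}.Infinite) (i : ℕ) :
    onePos v (i + (v 0).toNat) = onePos (fun j => v (j + 1)) i + 1 := by
  set n := onePos (fun j => v (j + 1)) i
  have hn : v (n + 1) = true := Nat.nth_mem_of_infinite hinf.setOf_eq_true_succ i
  have hcount : Nat.count (fun k => v k = true) (n + 1) = i + (v 0).toNat := by
    have hcount_shift : Nat.count (fun k => v (k + 1) = true) n = i :=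
      Nat.count_nth_of_infinite hinf.setOf_eq_true_succ i
    rw [Nat.count_succ', hcount_shift]
    cases v 0 <;> rfl
  rw [← hcount]
  exact Nat.nth_count hn

lemma phiPartial_succ_shift {v : ℕ → Bool} (hinf : {n | v n = true}.Infinite) (m : ℕ) :
    phiPartial (fun j => v (j + 1)) m = Tb (v 0) (phiPartial v (m + (v 0).toNat)) := by
  have hpos := onePos_add_toNat hinf
  unfold phiPartial
  cases h0 : v 0
  · simp only [h0, Bool.toNat_false, add_zero, Tb, Bool.false_eq_true, ↓reduceIte] at hpos ⊢
    rw [neg_div, Finset.sum_div]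
    refine congrArg _ (Finset.sum_congr rfl fun i _ => ?_)
    rw [hpos, pow_succ]
    ring
  · simp only [h0, Bool.toNat_true, Tb, ↓reduceIte] at hpos ⊢
    have hterm : ∀ i ∈ Finset.range m, (2 : ℝ) ^ onePos v (i + 1) / 3 ^ (i + 1 + 1) =
        2 / 3 * ((2 : ℝ) ^ onePos (fun j => v (j + 1)) i / 3 ^ (i + 1)) := fun i _ => by
      rw [hpos, pow_succ, pow_succ (3 : ℝ) (i + 1)]
      ring
    have hzero : onePos v 0 = 0 := Nat.nth_zero_of_zero h0
    rw [Finset.sum_range_succ', Finset.sum_congr rfl hterm, ← Finset.mul_sum, hzero]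
    ring

noncomputable def TbHomeomorph (b : Bool) : ℝ ≃ₜ ℝ where
  toFun := Tb b
  invFun x := if b then (2 * x - 1) / 3 else 2 * x
  left_inv x := by cases b <;> simp only [Tb, Bool.false_eq_true, ↓reduceIte] <;> ring
  right_inv x := by cases b <;> simp only [Tb, Bool.false_eq_true, ↓reduceIte] <;> ring
  continuous_toFun := by
    show Continuous fun x => Tb b x
    cases b <;> simp only [Tb, Bool.false_eq_true, ↓reduceIte] <;> fun_prop
  continuous_invFun := by cases b <;> simp only [Bool.false_eq_true, ↓reduceIte] <;> fun_prop

noncomputable def TwordHomeomorph : List Bool → ℝ ≃ₜ ℝ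
  | [] => Homeomorph.refl ℝ
  | b :: u => (TbHomeomorph b).trans (TwordHomeomorph u)

@[simp]
lemma coe_TwordHomeomorph (u : List Bool) : ⇑(TwordHomeomorph u) = Tword u := by
  induction u with
  | nil => rfl
  | cons b u ih => funext x; simp [TwordHomeomorph, Tword, ih, TbHomeomorph]

lemma wordPrefix_succ (v : ℕ → Bool) (ℓ : ℕ) :
    wordPrefix v (ℓ + 1) = v 0 :: wordPrefix (fun j => v (j + 1)) ℓ := by
  simp [wordPrefix, List.range_succ_eq_map, Function.comp_def]

lemma tendsto_phiPartial_succ_shift_iff {v : ℕ → Bool} (hinf : {n | v n = true}.Infinite)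
    (ζ : ℝ) :
    Tendsto (phiPartial fun j => v (j + 1)) atTop (nhds (Tb (v 0) ζ)) ↔
      Tendsto (phiPartial v) atTop (nhds ζ) := by
  rw [funext (phiPartial_succ_shift hinf),
    ← tendsto_add_atTop_iff_nat (f := phiPartial v) (v 0).toNat]
  exact (TbHomeomorph (v 0)).isInducing.tendsto_nhds_iff.symm

lemma tendsto_phiPartial_shift_iff (ℓ : ℕ) {v : ℕ → Bool} (hinf : {n | v n = true}.Infinite)
    (ζ : ℝ) :
    Tendsto (phiPartial fun j => v (ℓ + j)) atTop (nhds (Tword (wordPrefix v ℓ) ζ)) ↔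
      Tendsto (phiPartial v) atTop (nhds ζ) := by
  induction ℓ generalizing v ζ with
  | zero => simp [wordPrefix, Tword]
  | succ ℓ ih =>
    have hshift : (fun j => v (ℓ + 1 + j)) = fun j => (fun k => v (k + 1)) (ℓ + j) :=
      funext fun j => congrArg v (by omega)
    rw [hshift, wordPrefix_succ, Tword, ih hinf.setOf_eq_true_succ,
      tendsto_phiPartial_succ_shift_iff hinf]

theorem stmt13_general (v : ℕ → Bool) (hv : ¬ EventuallyPeriodicWord v)
    (ℓ : ℕ) :
    (∀ ζ : ℝ, Tendsto (phiPartial v) atTop (nhds ζ) →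
      Tendsto (phiPartial fun j => v (ℓ + j)) atTop
        (nhds (Tword (wordPrefix v ℓ) ζ))) ∧
    ((∃ L : ℝ, Tendsto (phiPartial fun j => v (ℓ + j)) atTop (nhds L)) →
      ∃ L : ℝ, Tendsto (phiPartial v) atTop (nhds L)) := by
  have hiff :=
    tendsto_phiPartial_shift_iff ℓ (infinite_setOf_eq_true_of_not_eventuallyPeriodicWord hv)
  refine ⟨fun ζ hζ => (hiff ζ).2 hζ, fun ⟨L, hL⟩ =>
    ⟨(TwordHomeomorph (wordPrefix v ℓ)).symm L, ?_⟩⟩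
  rwa [← hiff, ← coe_TwordHomeomorph, Homeomorph.apply_symm_apply]

/-- Let `v` be aperiodic, `u` its prefix of length `ℓ ≥ 1` and `r` the shift
`r_j = v_{ℓ+j}`.  If `Φ_ℝ(v)` converges to `ζ` then `Φ_ℝ(r)` converges to
`T_u(ζ)`; conversely, if `Φ_ℝ(r)` converges then so does `Φ_ℝ(v)`. -/
theorem stmt13 (v : ℕ → Bool) (hv : ¬ EventuallyPeriodicWord v)
    (ℓ : ℕ) (hℓ : 1 ≤ ℓ) :
    (∀ ζ : ℝ, Tendsto (phiPartial v) atTop (nhds ζ) →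
      Tendsto (phiPartial fun j => v (ℓ + j)) atTop
        (nhds (Tword (wordPrefix v ℓ) ζ))) ∧
    ((∃ L : ℝ, Tendsto (phiPartial fun j => v (ℓ + j)) atTop (nhds L)) →
      ∃ L : ℝ, Tendsto (phiPartial v) atTop (nhds L)) :=
  stmt13_general v hv ℓ
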